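/- Let (Δ, 𝔬, m) be a loopless Brauer graph, and for each pair of vertices {μ,ν} joined by α ≥ 2 parallel edges (an α-marked pair), choose a distinguished vertex. List the marked pairs {μ₁,ν₁},…,{μ_n,ν_n} with multiplicities α₁,…,α_n, let G = ∏_{k=1}^n ℤ_{α_k}, and define W: 𝒵_Δ → G by W(i,j) = z_k (the element with generator g_k in component k, identity elsewhere) if the endpoints of i form the k-th marked pair and the vertex at which j succeeds i is the distinguished vertex of that pair, and W(i,j) = id otherwise. Then ω_μ = id for every vertex μ, W is a Brauer weighting, and the covering graph Δ_W has no multiple edges between any two vertices. -/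

import Mathlib

/-- A Brauer graph `(Γ, 𝔬, m)`, presented via half-edges: `H` is the (finite, nonempty)
set of half-edges, `σ` is the successor permutation whose cycle at a vertex lists the
incident half-edges in the cyclic order `𝔬` (a loop contributes two half-edges, i.e. is
"listed twice"), `ι` is the fixed-point-free involution pairing the two half-edges of
each edge, `v` assigns to each half-edge its vertex (so the fibres of `v` are exactly
the cycles of `σ`), the graph is connected, and `m` is the multiplicity function. -/
structure BrauerGraph where
  H : Type
  V : Type
  fintypeH : Fintype H
  decEqH : DecidableEq H
  fintypeV : Fintype V
  decEqV : DecidableEq V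
  nonemptyH : Nonempty H
  σ : Equiv.Perm H
  ι : Equiv.Perm H
  ι_invol : ∀ h, ι (ι h) = h
  ι_ne : ∀ h, ι h ≠ h
  v : H → V
  v_surj : Function.Surjective v
  v_eq_iff : ∀ h h', v h = v h' ↔ ∃ n : ℤ, (σ ^ n) h = h'
  connected : ∀ h h' : H, ∃ g ∈ Subgroup.closure ({σ, ι} : Set (Equiv.Perm H)), g h = h'
  m : V → ℕ
  m_pos : ∀ μ, 0 < m μ

attribute [instance] BrauerGraph.fintypeH BrauerGraph.decEqH
attribute [instance] BrauerGraph.fintypeV BrauerGraph.decEqV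

namespace BrauerGraph

variable (Γ : BrauerGraph)

/-- The valency of a vertex: the number of incident half-edges (loops counted twice). -/
noncomputable def val (μ : Γ.V) : ℕ := Nat.card {h : Γ.H // Γ.v h = μ}

end BrauerGraph

/-- A Brauer action of a group `G` on a Brauer graph: a faithful action on half-edges
commuting with the successor permutation (i.e. orientation/successor preserving) and
with the edge involution (i.e. an action by graph automorphisms), and preserving the
multiplicity function. -/
structure BrauerAction (G : Type) [Group G] (Γ : BrauerGraph) where
  e : G →* Equiv.Perm Γ.H
  faithful : Function.Injective e
  comm_σ : ∀ g h, e g (Γ.σ h) = Γ.σ (e g h)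
  comm_ι : ∀ g h, e g (Γ.ι h) = Γ.ι (e g h)
  m_inv : ∀ g h, Γ.m (Γ.v (e g h)) = Γ.m (Γ.v h)

namespace BrauerAction

variable {G : Type} [Group G] {Γ : BrauerGraph}

/-- A free Brauer action: the action is free on the set of edges (loops counted twice,
i.e. on half-edges). -/
def IsFree (A : BrauerAction G Γ) : Prop := ∀ (g : G) (h : Γ.H), A.e g h = h → g = 1

/-- The orbit equivalence relation of the action on half-edges. -/
def orbSetoid (A : BrauerAction G Γ) : Setoid Γ.H where
  r h h' := ∃ g : G, A.e g h = h'
  iseqv := by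
    refine ⟨fun h => ⟨1, by simp⟩, ?_, ?_⟩
    · rintro h h' ⟨g, hg⟩
      exact ⟨g⁻¹, by rw [← hg, ← Equiv.Perm.mul_apply, ← map_mul]; simp⟩
    · rintro a b c ⟨g₁, hg₁⟩ ⟨g₂, hg₂⟩
      exact ⟨g₂ * g₁, by rw [map_mul, Equiv.Perm.mul_apply, hg₁, hg₂]⟩

/-- The orbit equivalence relation of the action restricted to a subset of half-edges. -/
def subOrbSetoid (A : BrauerAction G Γ) (P : Γ.H → Prop) : Setoid {h : Γ.H // P h} where
  r p q := ∃ g : G, A.e g p.1 = q.1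
  iseqv := by
    refine ⟨fun p => ⟨1, by simp⟩, ?_, ?_⟩
    · rintro p q ⟨g, hg⟩
      exact ⟨g⁻¹, by rw [← hg, ← Equiv.Perm.mul_apply, ← map_mul]; simp⟩
    · rintro a b c ⟨g₁, hg₁⟩ ⟨g₂, hg₂⟩
      exact ⟨g₂ * g₁, by rw [map_mul, Equiv.Perm.mul_apply, hg₁, hg₂]⟩

/-- The induced action of `g ∈ G` on vertices (defined via a chosen half-edge
in the fibre of the vertex). -/
noncomputable def vmap (A : BrauerAction G Γ) (g : G) (μ : Γ.V) : Γ.V :=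
  Γ.v (A.e g (Γ.v_surj μ).choose)

/-- The valency, in the orbit graph `Γ/G`, of the orbit vertex `μ̄` of `μ`: the number
of `G`-orbits of half-edges incident with a vertex in the orbit of `μ`. -/
noncomputable def orbVal (A : BrauerAction G Γ) (μ : Γ.V) : ℕ :=
  Nat.card (Quotient (A.subOrbSetoid (fun h => ∃ a : G, Γ.v (A.e a h) = μ)))

/-- The multiplicity function `m̄(μ̄) = val(μ)·m(μ)/val(μ̄)` of the orbit graph,
expressed on representatives. -/
noncomputable def mbar (A : BrauerAction G Γ) (μ : Γ.V) : ℕ :=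
  Γ.val μ * Γ.m μ / A.orbVal μ

end BrauerAction

namespace BrauerGraph

variable (Γ : BrauerGraph) {G : Type} [CommGroup G]

/-- `ω_μ`: the product of the values of a successor weighting `W` over all successor
pairs at the vertex `μ` (a successor pair `(i, σ i)` is identified with the half-edge
`i`). -/
noncomputable def omega (W : Γ.H → G) (μ : Γ.V) : G :=
  ∏ h ∈ Finset.univ.filter (fun h => Γ.v h = μ), W h

/-- `ω(i₁, i_{r+1})`: the product of the weights along the first `r` steps of the
successor sequence of the half-edge `h`. -/
noncomputable def wpath (W : Γ.H → G) (h : Γ.H) (r : ℕ) : G :=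
  ∏ t ∈ Finset.range r, W ((Γ.σ ^ t) h)

/-- The generating relation for the equivalence classes `[i, H_{μ,s}]` defining the
vertices of the Brauer covering graph `Δ_W`: a pair `(i, g)` (representing the pair of
`i` and the coset `H_{v i}·g`) is related to `(σ i, g·W(i))`, and to `(i, g·ω_{v i})`
(the latter identifies representatives of the same coset of `H_μ = ⟨ω_μ⟩`). -/
def covRel (W : Γ.H → G) : Γ.H × G → Γ.H × G → Prop := fun p q =>
  (q.1 = Γ.σ p.1 ∧ q.2 = p.2 * W p.1) ∨ (q.1 = p.1 ∧ q.2 = p.2 * Γ.omega W (Γ.v p.1))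

end BrauerGraph

/-- The number of (half-)edges from `μ` to `ν` in a loopless Brauer graph: the number
of parallel edges joining `μ` and `ν`, counted via their half-edges at `μ`. -/
noncomputable def BrauerGraph.nE (Γ : BrauerGraph) (μ ν : Γ.V) : ℕ :=
  Nat.card {h : Γ.H // Γ.v h = μ ∧ Γ.v (Γ.ι h) = ν}

/-!
At a vertex `μ`, the component of `ω_μ` at a marked pair `(μ, ν)` with `μ` distinguished
counts the `α` parallel edges from `μ` to `ν`, so it is `α = 0` in `ℤ_α`; every other
component counts nothing. Since `ω = id`, the class of `(i, g)` is the orbit of the step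
`(i, g) ↦ (σ i, g · W(i))`, so a covering edge `j_{g'}` with the same endpoints as `i_g`
has `j = σⁿ i` for some `n` shorter than one turn around the vertex `μ` of `i`, and equally
`ι j = σᵐ (ι i)` around `ν`, with equal walk weights. In the component of the marked pair,
only the walk around the distinguished vertex picks up weight, so the number of parallel
edges it passes is divisible by `α`; but a walk of less than one turn from one parallel edge
to another passes between `1` and `α - 1` of them. Hence `n = 0`. Unmarked pairs have at most
one edge, so there `j = i` anyway.
-/

open Finset Function

namespace Equiv.Perm

variable {α : Type*} (σ : Perm α)

theorem minimalPeriod_pos_of_finite [Finite α] (x : α) : 0 < minimalPeriod σ x :=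
  minimalPeriod_pos_of_mem_periodicPts
    ⟨orderOf σ, orderOf_pos σ, by
      rw [IsPeriodicPt, IsFixedPt, iterate_eq_pow, pow_orderOf_eq_one]; rfl⟩

theorem prod_range_minimalPeriod [Finite α] [DecidableEq α] {M : Type*} [CommMonoid M]
    (f : α → M) {x : α} {s : Finset α} (hs : ∀ y, y ∈ s ↔ σ.SameCycle x y) :
    ∏ t ∈ range (minimalPeriod σ x), f ((σ ^ t) x) = ∏ y ∈ s, f y := by
  have hinj : Set.InjOn (fun t => (σ ^ t) x) (range (minimalPeriod σ x)) := by
    rw [coe_range]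
    exact iterate_injOn_Iio_minimalPeriod
  rw [← prod_image hinj]
  congr 1
  ext y
  rw [hs, mem_image]
  constructor
  · rintro ⟨t, -, rfl⟩
    exact sameCycle_pow_right.2 (SameCycle.refl σ x)
  · intro hxy
    obtain ⟨t, rfl⟩ := hxy.exists_nat_pow_eq
    exact ⟨t % minimalPeriod σ x, mem_range.2 (Nat.mod_lt _ (σ.minimalPeriod_pos_of_finite x)),
      iterate_mod_minimalPeriod_eq⟩

theorem SameCycle.exists_nat_pow_eq_of_isOfFinOrder {σ : Perm α} (hσ : IsOfFinOrder σ)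
    {x y : α} (hxy : σ.SameCycle x y) : ∃ n : ℕ, (σ ^ n) x = y := by
  obtain ⟨i, rfl⟩ := hxy
  obtain ⟨n, hn⟩ :=
    (hσ.mem_powers_iff_mem_zpowers (y := σ ^ i)).2 (Subgroup.zpow_mem_zpowers σ i)
  exact ⟨n, by rw [← hn]⟩

end Equiv.Perm

namespace BrauerGraph

variable (Γ : BrauerGraph)

def ends (h : Γ.H) : Γ.V × Γ.V := (Γ.v h, Γ.v (Γ.ι h))

theorem ends_ι (h : Γ.H) : Γ.ends (Γ.ι h) = (Γ.ends h).swap := by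
  rw [ends, ends, Γ.ι_invol, Prod.swap_prod_mk]

theorem sameCycle_iff_v_eq {h e : Γ.H} : Γ.σ.SameCycle h e ↔ Γ.v h = Γ.v e :=
  (Γ.v_eq_iff h e).symm

theorem v_pow_apply (h : Γ.H) (n : ℕ) : Γ.v ((Γ.σ ^ n) h) = Γ.v h :=
  (Γ.sameCycle_iff_v_eq.1 (Equiv.Perm.sameCycle_pow_right.2 (Equiv.Perm.SameCycle.refl _ h))).symm

theorem card_ends_eq_nE (x : Γ.V × Γ.V) : #{h | Γ.ends h = x} = Γ.nE x.1 x.2 := by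
  rw [nE, Nat.card_eq_fintype_card, Fintype.card_subtype]
  simp [ends, Prod.ext_iff]

theorem card_filter_range_ends_lt_nE {h : Γ.H} {n : ℕ} (hn : n < minimalPeriod Γ.σ h)
    {x : Γ.V × Γ.V} (hx : Γ.ends ((Γ.σ ^ n) h) = x) :
    #{t ∈ range n | Γ.ends ((Γ.σ ^ t) h) = x} < Γ.nE x.1 x.2 := by
  have hinj : Set.InjOn (fun t => (Γ.σ ^ t) h) (Set.Iio (minimalPeriod Γ.σ h)) :=
    iterate_injOn_Iio_minimalPeriod
  rw [← card_ends_eq_nE]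
  calc #{t ∈ range n | Γ.ends ((Γ.σ ^ t) h) = x}
      ≤ #(({e | Γ.ends e = x} : Finset Γ.H).erase ((Γ.σ ^ n) h)) := by
        refine card_le_card_of_injOn (fun t => (Γ.σ ^ t) h) ?_ ?_
        · intro t ht
          rw [mem_coe, mem_filter, mem_range] at ht
          refine mem_erase.2 ⟨fun heq => ht.1.ne (hinj (ht.1.trans hn) hn heq), ?_⟩
          simpa using ht.2
        · intro s hs t ht
          rw [mem_coe, mem_filter, mem_range] at hs ht
          exact hinj (hs.1.trans hn) (ht.1.trans hn)
    _ < #{e | Γ.ends e = x} := card_erase_lt_of_mem (by simpa using hx)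

section Weighting

variable {G : Type} [CommGroup G] (W : Γ.H → G)

theorem wpath_zero (h : Γ.H) : Γ.wpath W h 0 = 1 := prod_range_zero _

theorem wpath_add (h : Γ.H) (a b : ℕ) :
    Γ.wpath W h (a + b) = Γ.wpath W h a * Γ.wpath W ((Γ.σ ^ a) h) b := by
  rw [wpath, wpath, wpath, prod_range_add]
  congr 1
  refine prod_congr rfl fun t _ => ?_
  rw [add_comm, pow_add, Equiv.Perm.mul_apply]

theorem wpath_succ (h : Γ.H) (n : ℕ) :
    Γ.wpath W h (n + 1) = Γ.wpath W h n * W ((Γ.σ ^ n) h) :=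
  prod_range_succ _ _

theorem wpath_minimalPeriod (h : Γ.H) :
    Γ.wpath W h (minimalPeriod Γ.σ h) = Γ.omega W (Γ.v h) :=
  Γ.σ.prod_range_minimalPeriod W fun e => by
    rw [mem_filter, Γ.sameCycle_iff_v_eq, eq_comm]
    simp

variable {W}

theorem wpath_mod_minimalPeriod (hω : ∀ μ, Γ.omega W μ = 1) (h : Γ.H) (n : ℕ) :
    Γ.wpath W h (n % minimalPeriod Γ.σ h) = Γ.wpath W h n := by
  set p := minimalPeriod Γ.σ h
  have hfix : ∀ q, (Γ.σ ^ (p * q)) h = h :=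
    (isPeriodicPt_minimalPeriod Γ.σ h).mul_const
  have hturns : ∀ q, Γ.wpath W h (p * q) = 1 := by
    intro q
    induction q with
    | zero => exact Γ.wpath_zero W h
    | succ q ih => rw [Nat.mul_succ, wpath_add, ih, hfix, wpath_minimalPeriod, hω, one_mul]
  conv_rhs => rw [← Nat.div_add_mod n p, wpath_add, hturns, hfix, one_mul]

/-- When `ω = id`, the classes `[i, H_{μ,s}]` are the orbits of this permutation. -/
def stepPerm (W : Γ.H → G) : Equiv.Perm (Γ.H × G) where
  toFun p := (Γ.σ p.1, p.2 * W p.1)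
  invFun q := (Γ.σ.symm q.1, q.2 * (W (Γ.σ.symm q.1))⁻¹)
  left_inv p := by simp
  right_inv q := by simp

theorem stepPerm_pow_apply (h : Γ.H) (g : G) (n : ℕ) :
    (Γ.stepPerm W ^ n) (h, g) = ((Γ.σ ^ n) h, g * Γ.wpath W h n) := by
  induction n with
  | zero => simp [wpath_zero]
  | succ n ih =>
    rw [pow_succ', Equiv.Perm.mul_apply, ih, wpath_succ, ← mul_assoc, pow_succ',
      Equiv.Perm.mul_apply]
    rfl

theorem isOfFinOrder_stepPerm (hω : ∀ μ, Γ.omega W μ = 1) : IsOfFinOrder (Γ.stepPerm W) := by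
  refine isOfFinOrder_iff_pow_eq_one.2 ⟨orderOf Γ.σ, orderOf_pos Γ.σ, ?_⟩
  ext1 ⟨h, g⟩
  have hdvd : minimalPeriod Γ.σ h ∣ orderOf Γ.σ := IsPeriodicPt.minimalPeriod_dvd <| by
    rw [IsPeriodicPt, IsFixedPt, Equiv.Perm.iterate_eq_pow, pow_orderOf_eq_one]; rfl
  rw [stepPerm_pow_apply, ← wpath_mod_minimalPeriod Γ hω, Nat.mod_eq_zero_of_dvd hdvd,
    wpath_zero, mul_one, pow_orderOf_eq_one]
  rfl

theorem sameCycle_stepPerm_of_eqvGen (hω : ∀ μ, Γ.omega W μ = 1) {p q : Γ.H × G}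
    (hpq : Relation.EqvGen (Γ.covRel W) p q) : (Γ.stepPerm W).SameCycle p q := by
  refine (Equiv.Perm.SameCycle.equivalence _).eqvGen_iff.1 (Relation.EqvGen.mono ?_ p q hpq)
  rintro ⟨h, g⟩ ⟨h', g'⟩ (⟨rfl, rfl⟩ | ⟨rfl, hg⟩)
  · exact ⟨1, rfl⟩
  · dsimp only at hg ⊢
    rw [hg, hω, mul_one]

theorem exists_lt_minimalPeriod_of_eqvGen (hω : ∀ μ, Γ.omega W μ = 1) {h h' : Γ.H} {g g' : G}
    (hrel : Relation.EqvGen (Γ.covRel W) (h, g) (h', g')) :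
    ∃ n < minimalPeriod Γ.σ h, (Γ.σ ^ n) h = h' ∧ g' = g * Γ.wpath W h n := by
  obtain ⟨n, hn⟩ := (Γ.sameCycle_stepPerm_of_eqvGen hω hrel).exists_nat_pow_eq_of_isOfFinOrder
    (Γ.isOfFinOrder_stepPerm hω)
  rw [stepPerm_pow_apply, Prod.mk.injEq] at hn
  refine ⟨n % minimalPeriod Γ.σ h, Nat.mod_lt _ (Γ.σ.minimalPeriod_pos_of_finite h), ?_, ?_⟩
  · rw [← hn.1]
    exact iterate_mod_minimalPeriod_eq
  · rw [wpath_mod_minimalPeriod Γ hω, hn.2]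

end Weighting

section MarkedPairs

variable {Γ} {D : Set (Γ.V × Γ.V)}
  {W : Γ.H → ((x : D) → Multiplicative (ZMod (Γ.nE x.1.1 x.1.2)))}

variable (Γ D W) in
def IsMarkedPairWeighting : Prop :=
  ∀ h x, W h x = if Γ.ends h = (x : Γ.V × Γ.V) then Multiplicative.ofAdd 1 else 1

namespace IsMarkedPairWeighting

theorem prod_apply (hW : Γ.IsMarkedPairWeighting D W) {ι : Type*} (s : Finset ι)
    (f : ι → Γ.H) (x : D) : (∏ t ∈ s, W (f t)) x =
      Multiplicative.ofAdd (#{t ∈ s | Γ.ends (f t) = x} : ZMod (Γ.nE x.1.1 x.1.2)) := by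
  rw [Finset.prod_apply, prod_congr rfl fun t _ => hW (f t) x, prod_ite, prod_const_one,
    mul_one, prod_const, ← ofAdd_nsmul, nsmul_one]

theorem omega_eq_one (hW : Γ.IsMarkedPairWeighting D W) (μ : Γ.V) : Γ.omega W μ = 1 := by
  funext x
  change (∏ h ∈ _, W (id h)) x = 1
  rw [hW.prod_apply, ofAdd_eq_one, filter_filter]
  simp only [id_eq]
  by_cases hμ : (x : Γ.V × Γ.V).1 = μ
  · rw [filter_congr (q := fun h => Γ.ends h = x) fun h _ =>
        and_iff_right_of_imp fun hx => hμ ▸ congrArg Prod.fst hx,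
      card_ends_eq_nE, ZMod.natCast_self]
  · rw [filter_false_of_mem fun h _ ⟨hv, hx⟩ => hμ ((congrArg Prod.fst hx).symm.trans hv),
      card_empty, Nat.cast_zero]

theorem eq_zero_of_wpath_eq (hW : Γ.IsMarkedPairWeighting D W) {h : Γ.H}
    (hloop : Γ.v (Γ.ι h) ≠ Γ.v h) (hD : Γ.ends h ∈ D) {n m : ℕ}
    (hn : n < minimalPeriod Γ.σ h) (hends : Γ.ends ((Γ.σ ^ n) h) = Γ.ends h)
    (heq : Γ.wpath W h n = Γ.wpath W (Γ.ι h) m) : n = 0 := by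
  set x : D := ⟨Γ.ends h, hD⟩
  have hfar : Γ.wpath W (Γ.ι h) m x = 1 := by
    rw [wpath, hW.prod_apply, ofAdd_eq_one, filter_false_of_mem, card_empty, Nat.cast_zero]
    intro t _ ht
    exact hloop ((Γ.v_pow_apply _ t).symm.trans (congrArg Prod.fst ht))
  have hdvd : Γ.nE (Γ.ends h).1 (Γ.ends h).2 ∣
      #{t ∈ range n | Γ.ends ((Γ.σ ^ t) h) = Γ.ends h} := by
    rw [← ZMod.natCast_eq_zero_iff, ← ofAdd_eq_one]
    have hnear := congrFun heq x
    rwa [hfar, wpath, hW.prod_apply] at hnear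
  by_contra hn0
  have hpos : 0 < #{t ∈ range n | Γ.ends ((Γ.σ ^ t) h) = Γ.ends h} :=
    card_pos.2 ⟨0, mem_filter.2 ⟨mem_range.2 (Nat.pos_of_ne_zero hn0), by simp⟩⟩
  exact (Nat.le_of_dvd hpos hdvd).not_gt (Γ.card_filter_range_ends_lt_nE hn hends)

theorem eq_of_eqvGen (hW : Γ.IsMarkedPairWeighting D W)
    (hD : ∀ μ ν : Γ.V, 2 ≤ Γ.nE μ ν → (μ, ν) ∈ D ∨ (ν, μ) ∈ D) {h k : Γ.H}
    (hloop : Γ.v (Γ.ι h) ≠ Γ.v h)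
    {g g' : (x : D) → Multiplicative (ZMod (Γ.nE x.1.1 x.1.2))}
    (hrel : Relation.EqvGen (Γ.covRel W) (h, g) (k, g'))
    (hrelι : Relation.EqvGen (Γ.covRel W) (Γ.ι h, g) (Γ.ι k, g')) : k = h ∧ g' = g := by
  have hω := hW.omega_eq_one
  obtain ⟨n, hn, rfl, rfl⟩ := Γ.exists_lt_minimalPeriod_of_eqvGen hω hrel
  obtain ⟨m, hm, hmk, hg⟩ := Γ.exists_lt_minimalPeriod_of_eqvGen hω hrelι
  have heq : Γ.wpath W h n = Γ.wpath W (Γ.ι h) m := mul_left_cancel hg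
  have hends : Γ.ends ((Γ.σ ^ n) h) = Γ.ends h :=
    Prod.ext (Γ.v_pow_apply h n) (by rw [ends, ends, ← hmk]; exact Γ.v_pow_apply _ m)
  have hfix : (Γ.σ ^ n) h = h := by
    by_cases hDh : Γ.ends h ∈ D
    · rw [hW.eq_zero_of_wpath_eq hloop hDh hn hends heq, pow_zero, Equiv.Perm.one_apply]
    by_cases hDι : (Γ.ends h).swap ∈ D
    · have hendsι : Γ.ends ((Γ.σ ^ m) (Γ.ι h)) = Γ.ends (Γ.ι h) := by
        rw [hmk, ends_ι, ends_ι, hends]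
      have hm0 := hW.eq_zero_of_wpath_eq (by rw [Γ.ι_invol]; exact hloop.symm)
        (Γ.ends_ι h ▸ hDι) hm hendsι (m := n) (heq.symm.trans (by rw [Γ.ι_invol]))
      rw [hm0, pow_zero, Equiv.Perm.one_apply] at hmk
      exact Γ.ι.injective hmk.symm
    have hle : #{e | Γ.ends e = Γ.ends h} ≤ 1 := by
      rw [card_ends_eq_nE]
      by_contra hlt
      exact (hD (Γ.ends h).1 (Γ.ends h).2 (by omega)).elim hDh hDι
    exact card_le_one.1 hle _ (by simpa using hends) _ (by simp)
  have hn0 : n = 0 := IsPeriodicPt.eq_zero_of_lt_minimalPeriod hfix hn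
  subst hn0
  simp [wpath_zero]

end IsMarkedPairWeighting

end MarkedPairs

end BrauerGraph

/-- The marked pairs with their distinguished vertices are encoded as the set `D` of ordered
pairs `(distinguished vertex, other vertex)`; the last conjunct says that two covering edges
with the same unordered pair of endpoints coincide. -/
theorem multiple_edge_removal_general (Γ : BrauerGraph)
    (hloopless : ∀ h : Γ.H, Γ.v (Γ.ι h) ≠ Γ.v h)
    (D : Set (Γ.V × Γ.V))
    (hD2 : ∀ μ ν : Γ.V, 2 ≤ Γ.nE μ ν → Xor' ((μ, ν) ∈ D) ((ν, μ) ∈ D))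
    (W : Γ.H → ((x : D) → Multiplicative (ZMod (Γ.nE x.1.1 x.1.2))))
    (hWdef : ∀ (h : Γ.H) (x : D),
      W h x = if (Γ.v h, Γ.v (Γ.ι h)) = (x : Γ.V × Γ.V)
        then Multiplicative.ofAdd (1 : ZMod (Γ.nE x.1.1 x.1.2)) else 1) :
    (∀ μ : Γ.V, Γ.omega W μ = 1) ∧
    (∀ μ : Γ.V, orderOf (Γ.omega W μ) ∣ Γ.m μ) ∧
    (∀ (h h' : Γ.H) (g g' : (x : D) → Multiplicative (ZMod (Γ.nE x.1.1 x.1.2))),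
      ((Relation.EqvGen (Γ.covRel W) (h, g) (h', g') ∧
          Relation.EqvGen (Γ.covRel W) (Γ.ι h, g) (Γ.ι h', g')) ∨
        (Relation.EqvGen (Γ.covRel W) (h, g) (Γ.ι h', g') ∧
          Relation.EqvGen (Γ.covRel W) (Γ.ι h, g) (h', g'))) →
      ((h' = h ∧ g' = g) ∨ (h' = Γ.ι h ∧ g' = g))) := by
  have hW : Γ.IsMarkedPairWeighting D W := hWdef
  refine ⟨hW.omega_eq_one, fun μ => by rw [hW.omega_eq_one, orderOf_one]; exact one_dvd _, ?_⟩
  have hD : ∀ μ ν, 2 ≤ Γ.nE μ ν → (μ, ν) ∈ D ∨ (ν, μ) ∈ D :=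
    fun μ ν hμν => Xor.or (hD2 μ ν hμν)
  rintro h h' g g' (⟨hrel, hrelι⟩ | ⟨hrel, hrelι⟩)
  · exact Or.inl (hW.eq_of_eqvGen hD (hloopless h) hrel hrelι)
  · rw [← Γ.ι_invol h'] at hrelι
    obtain ⟨hh', rfl⟩ := hW.eq_of_eqvGen hD (hloopless h) hrel hrelι
    exact Or.inr ⟨by rw [← hh', Γ.ι_invol], rfl⟩

/-- removal of multiple edges: Let `(Δ, 𝔬, m)` be a loopless Brauer
graph.  Encode the `α`-marked pairs together with their choice of distinguished vertex
as a set `D` of ordered pairs `(distinguished vertex, other vertex)`: every element of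
`D` is a marked pair (at least `2` parallel edges), and each marked pair appears in `D`
in exactly one of its two orders.  Let `G = ∏_{x ∈ D} ℤ_{α_x}` and let `W` assign
`z_x` to a successor pair `(i,j)` at a vertex `μ` when the endpoints of `i` form the
marked pair `x` with `μ` its distinguished vertex, and `id` otherwise.  Then
`ω_μ = id` for every vertex, `W` is a Brauer weighting, and the covering graph `Δ_W`
has no multiple edges: two covering edges with the same (unordered) pair of endpoints
coincide. -/
theorem multiple_edge_removal (Γ : BrauerGraph)
    (hloopless : ∀ h : Γ.H, Γ.v (Γ.ι h) ≠ Γ.v h)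
    (D : Set (Γ.V × Γ.V))
    (hD1 : ∀ x ∈ D, 2 ≤ Γ.nE x.1 x.2)
    (hD2 : ∀ μ ν : Γ.V, 2 ≤ Γ.nE μ ν → Xor' ((μ, ν) ∈ D) ((ν, μ) ∈ D))
    (W : Γ.H → ((x : D) → Multiplicative (ZMod (Γ.nE x.1.1 x.1.2))))
    (hWdef : ∀ (h : Γ.H) (x : D),
      W h x = if (Γ.v h, Γ.v (Γ.ι h)) = (x : Γ.V × Γ.V)
        then Multiplicative.ofAdd (1 : ZMod (Γ.nE x.1.1 x.1.2)) else 1) :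
    (∀ μ : Γ.V, Γ.omega W μ = 1) ∧
    (∀ μ : Γ.V, orderOf (Γ.omega W μ) ∣ Γ.m μ) ∧
    (∀ (h h' : Γ.H) (g g' : (x : D) → Multiplicative (ZMod (Γ.nE x.1.1 x.1.2))),
      ((Relation.EqvGen (Γ.covRel W) (h, g) (h', g') ∧
          Relation.EqvGen (Γ.covRel W) (Γ.ι h, g) (Γ.ι h', g')) ∨
        (Relation.EqvGen (Γ.covRel W) (h, g) (Γ.ι h', g') ∧
          Relation.EqvGen (Γ.covRel W) (Γ.ι h, g) (h', g'))) →
      ((h' = h ∧ g' = g) ∨ (h' = Γ.ι h ∧ g' = g))) :=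
  multiple_edge_removal_general Γ hloopless D hD2 W hWdef
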